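/- Let f : ℝ^n → ℝ^n be a quadratic vector field (so f' is affine) satisfying det(I + (h/2)f'(x)) = det(I - (h/2)f'(x)) for all x, and let φ_h satisfy Kahan's relation (φ_h(x) - x)/h = 2f((x + φ_h(x))/2) - (1/2)f(x) - (1/2)f(φ_h(x)), with φ_h differentiable and the relevant matrices invertible. Then det(φ_h'(x)) · μ(φ_h(x)) = μ(x) where μ(x) = det(I - (h/2)f'(x))⁻¹. -/

import Mathlib

/-!
Since `f` is quadratic, `f'` is affine, so `f'((x + y) / 2) = (f' x + f' y) / 2`. Differentiating
Kahan's relation therefore collapses to `(I - (h/2) f'(x)) φ'(x) = I + (h/2) f'(φ x)`. Taking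
determinants and using `det (I + (h/2) f') = det (I - (h/2) f')` at `φ x` gives
`det (I - (h/2) f'(x)) · det φ'(x) = det (I - (h/2) f'(φ x))`, which is the claim.
-/

open Matrix

/-- The Jacobian matrix of a map `f : ℝ^n → ℝ^n` at a point `x`. -/
noncomputable def jacobian {ι : Type*} [Fintype ι] [DecidableEq ι]
    (f : (ι → ℝ) → (ι → ℝ)) (x : ι → ℝ) : Matrix ι ι ℝ :=
  Matrix.of fun i j => fderiv ℝ f x (Pi.single j 1) i

theorem hasFDerivAt_quadratic {𝕜 E F : Type*} [NontriviallyNormedField 𝕜] [CompleteSpace 𝕜]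
    [NormedAddCommGroup E] [NormedSpace 𝕜 E] [FiniteDimensional 𝕜 E]
    [NormedAddCommGroup F] [NormedSpace 𝕜 F]
    (q : E →ₗ[𝕜] E →ₗ[𝕜] F) (L : E →ₗ[𝕜] F) (d : F) (z : E) :
    HasFDerivAt (fun x => q x x + L x + d) (q z + q.flip z + L).toContinuousLinearMap z := by
  let Q : E →L[𝕜] E →L[𝕜] F :=
    (LinearMap.toContinuousLinearMap.toLinearMap ∘ₗ q).toContinuousLinearMap
  have hQ : HasFDerivAt (fun x => Q x x) ((Q z).comp (.id 𝕜 E) + Q.flip z) z :=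
    Q.hasFDerivAt.clm_apply (hasFDerivAt_id z)
  have hD : (q z + q.flip z + L).toContinuousLinearMap
      = (Q z).comp (.id 𝕜 E) + Q.flip z + L.toContinuousLinearMap := by
    ext v
    simp [Q]
  simpa [hD, Q] using (hQ.add L.toContinuousLinearMap.hasFDerivAt).add_const d

theorem jacobian_eq_toMatrix' {ι : Type*} [Fintype ι] [DecidableEq ι]
    (f : (ι → ℝ) → (ι → ℝ)) (x : ι → ℝ) :
    jacobian f x = LinearMap.toMatrix' (fderiv ℝ f x : (ι → ℝ) →ₗ[ℝ] ι → ℝ) := by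
  ext i j
  rfl

theorem kahan_linearization {E : Type*} [NormedAddCommGroup E] [NormedSpace ℝ E]
    {f φ : E → E} {Df : E → E →L[ℝ] E} (hf : ∀ z, HasFDerivAt f (Df z) z)
    (hDf : ∀ x y, Df ((1 / 2 : ℝ) • (x + y)) = (1 / 2 : ℝ) • (Df x + Df y)) {h : ℝ}
    (hkahan : ∀ x, φ x - x
      = h • ((2 : ℝ) • f ((1 / 2 : ℝ) • (x + φ x))
          - (1 / 2 : ℝ) • f x - (1 / 2 : ℝ) • f (φ x)))
    {x : E} {P : E →L[ℝ] E} (hφ : HasFDerivAt φ P x) :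
    (.id ℝ E - (h / 2) • Df x) ∘L P = .id ℝ E + (h / 2) • Df (φ x) := by
  have hP : P - .id ℝ E = h • ((2 : ℝ) • (Df ((1 / 2 : ℝ) • (x + φ x))).comp
      ((1 / 2 : ℝ) • (.id ℝ E + P)) - (1 / 2 : ℝ) • Df x - (1 / 2 : ℝ) • (Df (φ x)).comp P) := by
    have hlhs : HasFDerivAt (fun y => φ y - y) (P - .id ℝ E) x := hφ.sub (hasFDerivAt_id x)
    refine hlhs.unique ?_
    rw [funext hkahan]
    exact ((((hf _).comp x (((hasFDerivAt_id x).add hφ).const_smul _)).const_smul _).sub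
      ((hf x).const_smul _) |>.sub (((hf _).comp x hφ).const_smul _)).const_smul h
  ext1 v
  have hv := congr($hP v)
  simp only [hDf, _root_.sub_apply, _root_.smul_apply, ContinuousLinearMap.comp_apply,
    _root_.add_apply, ContinuousLinearMap.coe_id', id_eq, map_add, map_smul] at hv ⊢
  linear_combination (norm := module) hv

theorem stmt_17_general {n : ℕ} (f : (Fin n → ℝ) → (Fin n → ℝ))
    (q : (Fin n → ℝ) →ₗ[ℝ] (Fin n → ℝ) →ₗ[ℝ] (Fin n → ℝ))
    (L : (Fin n → ℝ) →ₗ[ℝ] (Fin n → ℝ)) (d : Fin n → ℝ)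
    (hquad : ∀ x, f x = q x x + L x + d)
    (h : ℝ)
    (hdet : ∀ x : Fin n → ℝ,
      ((1 : Matrix (Fin n) (Fin n) ℝ) + (h / 2) • jacobian f x).det
        = ((1 : Matrix (Fin n) (Fin n) ℝ) - (h / 2) • jacobian f x).det)
    (φ : (Fin n → ℝ) → (Fin n → ℝ)) (hφ : Differentiable ℝ φ)
    (hkahan : ∀ x, φ x - x
      = h • ((2 : ℝ) • f ((1 / 2 : ℝ) • (x + φ x))
          - (1 / 2 : ℝ) • f x - (1 / 2 : ℝ) • f (φ x)))
    (hinv1 : ∀ x, ((1 : Matrix (Fin n) (Fin n) ℝ) - (h / 2) • jacobian f x).det ≠ 0) :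
    ∀ x, (jacobian φ x).det *
        (((1 : Matrix (Fin n) (Fin n) ℝ) - (h / 2) • jacobian f (φ x)).det)⁻¹
      = (((1 : Matrix (Fin n) (Fin n) ℝ) - (h / 2) • jacobian f x).det)⁻¹ := by
  intro x
  let Df z := (q z + q.flip z + L).toContinuousLinearMap
  have hf : ∀ z, HasFDerivAt f (Df z) z := fun z => by
    simpa only [← funext hquad] using hasFDerivAt_quadratic q L d z
  have hDf : ∀ y z, Df ((1 / 2 : ℝ) • (y + z)) = (1 / 2 : ℝ) • (Df y + Df z) := fun y z => by
    ext1 v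
    simp only [map_add, map_smul, _root_.add_apply, _root_.smul_apply,
      LinearMap.coe_toContinuousLinearMap', LinearMap.flip_apply, Df]
    module
  have hJf : ∀ z, jacobian f z = LinearMap.toMatrix' (Df z) := fun z => by
    rw [jacobian_eq_toMatrix', (hf z).fderiv]
  have hmat : (1 - (h / 2) • jacobian f x) * jacobian φ x = 1 + (h / 2) • jacobian f (φ x) := by
    have := congr(LinearMap.toMatrix' ($(kahan_linearization hf hDf hkahan (hφ x).hasFDerivAt) :
      (Fin n → ℝ) →ₗ[ℝ] Fin n → ℝ))
    simpa [hJf, jacobian_eq_toMatrix', LinearMap.toMatrix'_comp, sub_mul, smul_mul_assoc] using this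
  have hdet_mul : (1 - (h / 2) • jacobian f x).det * (jacobian φ x).det
      = (1 - (h / 2) • jacobian f (φ x)).det := by
    rw [← det_mul, hmat, hdet]
  have hx := hinv1 x
  have hφx := hinv1 (φ x)
  field_simp
  linear_combination hdet_mul

theorem stmt_17 {n : ℕ} (f : (Fin n → ℝ) → (Fin n → ℝ))
    (q : (Fin n → ℝ) →ₗ[ℝ] (Fin n → ℝ) →ₗ[ℝ] (Fin n → ℝ))
    (hq : ∀ x y, q x y = q y x)
    (L : (Fin n → ℝ) →ₗ[ℝ] (Fin n → ℝ)) (d : Fin n → ℝ)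
    (hquad : ∀ x, f x = q x x + L x + d)
    (h : ℝ)
    (hdet : ∀ x : Fin n → ℝ,
      ((1 : Matrix (Fin n) (Fin n) ℝ) + (h / 2) • jacobian f x).det
        = ((1 : Matrix (Fin n) (Fin n) ℝ) - (h / 2) • jacobian f x).det)
    (φ : (Fin n → ℝ) → (Fin n → ℝ)) (hφ : Differentiable ℝ φ)
    (hkahan : ∀ x, φ x - x
      = h • ((2 : ℝ) • f ((1 / 2 : ℝ) • (x + φ x))
          - (1 / 2 : ℝ) • f x - (1 / 2 : ℝ) • f (φ x)))
    (hinv1 : ∀ x, ((1 : Matrix (Fin n) (Fin n) ℝ) - (h / 2) • jacobian f x).det ≠ 0)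
    (hinv2 : ∀ x, ((1 : Matrix (Fin n) (Fin n) ℝ)
        + (h / 2) • jacobian f (φ x)
        - (h / 2) • jacobian f ((1 / 2 : ℝ) • (x + φ x))).det ≠ 0) :
    ∀ x, (jacobian φ x).det *
        (((1 : Matrix (Fin n) (Fin n) ℝ) - (h / 2) • jacobian f (φ x)).det)⁻¹
      = (((1 : Matrix (Fin n) (Fin n) ℝ) - (h / 2) • jacobian f x).det)⁻¹ :=
  stmt_17_general f q L d hquad h hdet φ hφ hkahan hinv1
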